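/- arXiv:1608.06797 — 2 statements merged into one kernel-verified Lean document; each statement's English description precedes it below -/
import Mathlib

section
/- Let c be a minimum fractional additive stabilizer for a finite simple graph G=(V,E) with unit edge weights. Then every matching of maximum (1+c)-weight in G has cardinality equal to ν(G), the maximum cardinality of a matching in G. -/
open Finset
open scoped Classical

noncomputable section

namespace Stab

variable {V : Type*}

/-- A matching of `G`: a finite set of edges of `G` that are pairwise vertex-disjoint. -/
def IsMatching (G : SimpleGraph V) (M : Finset (Sym2 V)) : Prop :=
  (∀ e ∈ M, e ∈ G.edgeSet) ∧
    ∀ e ∈ M, ∀ f ∈ M, e ≠ f → ∀ v : V, v ∈ e → v ∉ f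

/-- `v` is exposed by `M` (no edge of `M` contains it). -/
def Exposed (M : Finset (Sym2 V)) (v : V) : Prop := ∀ e ∈ M, v ∉ e

/-- total `w`-weight of a finite set of edges -/
def weight (w : Sym2 V → ℝ) (M : Finset (Sym2 V)) : ℝ := ∑ e ∈ M, w e

/-- the edge set of `G`, as a finset -/
def edgeFin [Fintype V] [DecidableEq V] (G : SimpleGraph V) : Finset (Sym2 V) :=
  Finset.univ.filter fun e => e ∈ G.edgeSet

/-- the edges of `G` having both endpoints in `S` -/
def edgesIn [Fintype V] [DecidableEq V] (G : SimpleGraph V) (S : Set V) : Finset (Sym2 V) :=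
  Finset.univ.filter fun e => e ∈ G.edgeSet ∧ ∀ v ∈ e, v ∈ S

/-- `ν(G,w)`: the maximum total `w`-weight of a matching of `G` -/
def nuW (G : SimpleGraph V) (w : Sym2 V → ℝ) : ℝ :=
  sSup {x | ∃ M, IsMatching G M ∧ x = weight w M}

/-- `y` is a fractional `w`-vertex cover of `G` -/
def IsFracCover (G : SimpleGraph V) (w : Sym2 V → ℝ) (y : V → ℝ) : Prop :=
  (∀ v, 0 ≤ y v) ∧ ∀ u v : V, G.Adj u v → w s(u, v) ≤ y u + y v

/-- `τ_f(G,w)`: the minimum value of a fractional `w`-vertex cover of `G` -/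
def tauW [Fintype V] (G : SimpleGraph V) (w : Sym2 V → ℝ) : ℝ :=
  sInf {x | ∃ y, IsFracCover G w y ∧ x = ∑ v, y v}

/-- the weighted graph `(G,w)` is stable -/
def IsStable [Fintype V] (G : SimpleGraph V) (w : Sym2 V → ℝ) : Prop :=
  nuW G w = tauW G w

/-- `c` is a fractional additive stabilizer for the unit-weight graph `G` -/
def IsStabilizer [Fintype V] [DecidableEq V] (G : SimpleGraph V) (c : Sym2 V → ℝ) : Prop :=
  (∀ e ∈ edgeFin G, 0 ≤ c e) ∧ IsStable G fun e => 1 + c e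

/-- the cost `∑_{e ∈ E} c_e` of `c` -/
def cost [Fintype V] [DecidableEq V] (G : SimpleGraph V) (c : Sym2 V → ℝ) : ℝ :=
  ∑ e ∈ edgeFin G, c e

/-- `c` is a minimum fractional additive stabilizer of `G` -/
def IsMinStabilizer [Fintype V] [DecidableEq V] (G : SimpleGraph V) (c : Sym2 V → ℝ) : Prop :=
  IsStabilizer G c ∧ ∀ c', IsStabilizer G c' → cost G c ≤ cost G c'

/-- `OPT`: the minimum cost of a fractional additive stabilizer of `G` -/
def optCost [Fintype V] [DecidableEq V] (G : SimpleGraph V) : ℝ :=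
  sInf {x | ∃ c, IsStabilizer G c ∧ x = cost G c}

/-- `ν(G)`: the maximum cardinality of a matching of `G` -/
def nu (G : SimpleGraph V) : ℕ :=
  sSup {n | ∃ M, IsMatching G M ∧ M.card = n}

/-- `M` is a maximum-cardinality matching of `G` -/
def IsMaxMatching (G : SimpleGraph V) (M : Finset (Sym2 V)) : Prop :=
  IsMatching G M ∧ ∀ M', IsMatching G M' → M'.card ≤ M.card

/-- `M` is a matching of maximum `w`-weight in `G` -/
def IsMaxWeightMatching (G : SimpleGraph V) (w : Sym2 V → ℝ) (M : Finset (Sym2 V)) : Prop :=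
  IsMatching G M ∧ ∀ M', IsMatching G M' → weight w M' ≤ weight w M

/-- a feasible solution `(M,y,c)` of MFASP on `G` -/
def FeasSol [Fintype V] [DecidableEq V] (G : SimpleGraph V)
    (M : Finset (Sym2 V)) (y : V → ℝ) (c : Sym2 V → ℝ) : Prop :=
  IsMatching G M ∧ (∀ e ∈ edgeFin G, 0 ≤ c e) ∧
    IsFracCover G (fun e => 1 + c e) y ∧
    (∑ e ∈ M, (1 + c e)) = ∑ v, y v

/-- an optimal solution of MFASP on `G` -/
def OptSol [Fintype V] [DecidableEq V] (G : SimpleGraph V)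
    (M : Finset (Sym2 V)) (y : V → ℝ) (c : Sym2 V → ℝ) : Prop :=
  FeasSol G M y c ∧ IsMinStabilizer G c

/-- `v` is inessential: some maximum-cardinality matching exposes `v` -/
def Inessential (G : SimpleGraph V) (v : V) : Prop :=
  ∃ M, IsMaxMatching G M ∧ Exposed M v

/-- the set `X` of the Gallai–Edmonds decomposition -/
def geX (G : SimpleGraph V) : Set V := {v | Inessential G v}

/-- the Tutte set `Y = N(X) \ X` of the Gallai–Edmonds decomposition -/
def geY (G : SimpleGraph V) : Set V := {v | v ∉ geX G ∧ ∃ u ∈ geX G, G.Adj u v}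

/-- the set `Z = V \ (X ∪ Y)` of the Gallai–Edmonds decomposition -/
def geZ (G : SimpleGraph V) : Set V := {v | v ∉ geX G ∧ v ∉ geY G}

/-- `K` is a connected component of the subgraph of `G` induced on `X`. -/
def IsCompOf (G : SimpleGraph V) (X : Set V) (K : Set V) : Prop :=
  K ⊆ X ∧ (G.induce K).Connected ∧ ∀ u ∈ K, ∀ v ∈ X, G.Adj u v → v ∈ K

/-- properties (a)–(d) of a feasible MFASP solution `(M,y,c)` -/
def PropsABCD [Fintype V] [DecidableEq V] (G : SimpleGraph V)
    (M : Finset (Sym2 V)) (y : V → ℝ) (c : Sym2 V → ℝ) : Prop :=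
  (∀ e ∈ edgeFin G, e ∉ M → c e = 0) ∧
  (∀ e ∈ M, 0 ≤ c e ∧ c e ≤ 1) ∧
  M.card = nu G ∧
  (∀ e ∈ edgeFin G, ∃ z : ℤ, 2 * c e = (z : ℝ)) ∧
  (∀ v : V, y v = 0 ∨ y v = 1 / 2 ∨ y v = 1) ∧
  (∀ v ∈ geY G, 1 / 2 ≤ y v)

/-- a graph is factor-critical if deleting any vertex leaves a graph with a perfect matching -/
def IsFactorCritical (G : SimpleGraph V) : Prop :=
  ∀ v : V, ∃ M, IsMatching G M ∧ Exposed M v ∧ ∀ u : V, u ≠ v → ¬ Exposed M u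

/-- the neighbourhood `N_G(K)` of a vertex set `K` (outside of `K`) -/
def nbhd (G : SimpleGraph V) (K : Set V) : Set V :=
  {v | v ∉ K ∧ ∃ u ∈ K, G.Adj u v}

end Stab


namespace Stab

variable {V : Type*}

/-- sum of `y` over the two endpoints of an edge -/
def eSum (y : V → ℝ) : Sym2 V → ℝ :=
  Sym2.lift ⟨fun u v => y u + y v, fun _ _ => add_comm _ _⟩

@[simp] lemma eSum_mk (y : V → ℝ) (u v : V) : eSum y s(u, v) = y u + y v := by
  simp [eSum]

lemma edge_rep {G : SimpleGraph V} {e : Sym2 V} (he : e ∈ G.edgeSet) :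
    ∃ u v, G.Adj u v ∧ e = s(u, v) := by
  induction e using Sym2.ind with
  | _ u v => exact ⟨u, v, he, rfl⟩

/-- the set of vertices covered by `M` -/
def covFin [Fintype V] (M : Finset (Sym2 V)) : Finset V :=
  Finset.univ.filter fun v => ¬ Exposed M v

lemma mem_covFin [Fintype V] {M : Finset (Sym2 V)} {v : V} :
    v ∈ covFin M ↔ ∃ e ∈ M, v ∈ e := by
  simp only [covFin, Finset.mem_filter, Finset.mem_univ, true_and, Exposed]
  push_neg
  simp

lemma sum_eSum [Fintype V] [DecidableEq V] {G : SimpleGraph V} {M : Finset (Sym2 V)} (y : V → ℝ)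
    (hE : ∀ e ∈ M, e ∈ G.edgeSet)
    (hd : ∀ e ∈ M, ∀ f ∈ M, e ≠ f → ∀ v : V, v ∈ e → v ∉ f) :
    ∑ e ∈ M, eSum y e = ∑ v ∈ covFin M, y v := by
  have hbi : covFin M = M.biUnion (fun e => Finset.univ.filter (· ∈ e)) := by
    ext v
    simp [mem_covFin]
  rw [hbi, Finset.sum_biUnion]
  · refine Finset.sum_congr rfl fun e he => ?_
    obtain ⟨u, v, hadj, rfl⟩ := edge_rep (hE e he)
    have hne : u ≠ v := hadj.ne
    have : Finset.univ.filter (· ∈ s(u, v)) = {u, v} := by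
      ext x; simp [Sym2.mem_iff]
    rw [this, Finset.sum_pair hne, eSum_mk]
  · intro a ha b hb hab
    simp only [Finset.disjoint_left, Finset.mem_filter, Finset.mem_univ, true_and]
    intro v hv1 hv2
    exact hd a ha b hb hab v hv1 hv2

lemma weight_le_sum [Fintype V] [DecidableEq V] {G : SimpleGraph V} {w : Sym2 V → ℝ}
    {y : V → ℝ} (hy : IsFracCover G w y) {N : Finset (Sym2 V)} (hN : IsMatching G N) :
    weight w N ≤ ∑ v, y v := by
  have h1 : weight w N ≤ ∑ e ∈ N, eSum y e := by
    refine Finset.sum_le_sum fun e he => ?_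
    obtain ⟨u, v, hadj, rfl⟩ := edge_rep (hN.1 e he)
    rw [eSum_mk]
    exact hy.2 u v hadj
  rw [sum_eSum y hN.1 hN.2] at h1
  exact h1.trans (Finset.sum_le_sum_of_subset_of_nonneg (Finset.subset_univ _)
    fun v _ _ => hy.1 v)

lemma empty_matching (G : SimpleGraph V) : IsMatching G (∅ : Finset (Sym2 V)) :=
  ⟨fun e he => absurd he (Finset.notMem_empty e),
   fun e he => absurd he (Finset.notMem_empty e)⟩

lemma nuW_eq_weight [Fintype V] [DecidableEq V] {G : SimpleGraph V} {w : Sym2 V → ℝ}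
    {M : Finset (Sym2 V)} (hM : IsMaxWeightMatching G w M) : nuW G w = weight w M := by
  refine le_antisymm (csSup_le ⟨weight w M, M, hM.1, rfl⟩ ?_) (le_csSup ?_ ⟨M, hM.1, rfl⟩)
  · rintro x ⟨M', h1, rfl⟩
    exact hM.2 M' h1
  · exact ⟨weight w M, by rintro x ⟨M', h1, rfl⟩; exact hM.2 M' h1⟩

lemma tau_bddBelow [Fintype V] (G : SimpleGraph V) (w : Sym2 V → ℝ) :
    BddBelow {x | ∃ y, IsFracCover G w y ∧ x = ∑ v, y v} := by
  refine ⟨0, ?_⟩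
  rintro x ⟨y, hy, rfl⟩
  exact Finset.sum_nonneg fun v _ => hy.1 v

lemma exists_opt_cover [Fintype V] [DecidableEq V] (G : SimpleGraph V) (w : Sym2 V → ℝ) :
    ∃ y, IsFracCover G w y ∧ ∑ v, y v = tauW G w := by
  classical
  set B : ℝ := ∑ e ∈ edgeFin G, max (w e) 0 with hB
  have hB0 : 0 ≤ B := Finset.sum_nonneg fun e _ => le_max_right _ _
  have hBe : ∀ u v : V, G.Adj u v → w s(u, v) ≤ B := by
    intro u v h
    have hmem : s(u, v) ∈ edgeFin G := by
      simp only [edgeFin, Finset.mem_filter, Finset.mem_univ, true_and]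
      exact h
    exact (le_max_left _ _).trans
      (Finset.single_le_sum (fun e _ => le_max_right (w e) 0) hmem)
  set K : Set (V → ℝ) := {y | (∀ v, y v ∈ Set.Icc (0:ℝ) B) ∧ IsFracCover G w y} with hK
  have hKc : IsCompact K := by
    have h1 : IsCompact (Set.univ.pi fun _ : V => Set.Icc (0:ℝ) B) :=
      isCompact_univ_pi fun _ => isCompact_Icc
    refine h1.of_isClosed_subset ?_ ?_
    · have heq : K = (⋂ v : V, (fun y : V → ℝ => y v) ⁻¹' Set.Icc (0:ℝ) B) ∩
          ((⋂ v : V, (fun y : V → ℝ => y v) ⁻¹' Set.Ici (0:ℝ)) ∩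
           ⋂ u : V, ⋂ v : V, {y : V → ℝ | G.Adj u v → w s(u, v) ≤ y u + y v}) := by
        ext y
        simp only [hK, Set.mem_setOf_eq, Set.mem_inter_iff, Set.mem_iInter, Set.mem_preimage,
          Set.mem_Ici, IsFracCover]
      rw [heq]
      refine IsClosed.inter (isClosed_iInter fun v => isClosed_Icc.preimage (continuous_apply v))
        (IsClosed.inter (isClosed_iInter fun v => isClosed_Ici.preimage (continuous_apply v))
          (isClosed_iInter fun u => isClosed_iInter fun v => ?_))
      by_cases h : G.Adj u v
      · simp only [h, forall_true_left]
        exact isClosed_le continuous_const ((continuous_apply u).add (continuous_apply v))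
      · simp only [h, IsEmpty.forall_iff]
        exact isClosed_univ
    · intro y hy
      rw [Set.mem_univ_pi]
      intro v
      exact hy.1 v
  have hKne : K.Nonempty := by
    refine ⟨fun _ => B, fun v => ⟨hB0, le_refl _⟩, fun v => hB0, fun u v h => ?_⟩
    have := hBe u v h
    linarith
  have hcont : Continuous fun y : V → ℝ => ∑ v, y v :=
    continuous_finset_sum _ fun i _ => continuous_apply i
  obtain ⟨y0, hy0K, hy0min⟩ := hKc.exists_isMinOn hKne hcont.continuousOn
  refine ⟨y0, hy0K.2, le_antisymm ?_ (csInf_le (tau_bddBelow G w) ⟨y0, hy0K.2, rfl⟩)⟩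
  refine le_csInf ⟨∑ v, y0 v, y0, hy0K.2, rfl⟩ ?_
  rintro x ⟨y, hy, rfl⟩
  set y' : V → ℝ := fun v => min (y v) B with hy'
  have hy'K : y' ∈ K := by
    refine ⟨fun v => ⟨le_min (hy.1 v) hB0, min_le_right _ _⟩,
      fun v => le_min (hy.1 v) hB0, fun u v hadj => ?_⟩
    have h1 := hy.2 u v hadj
    have h2 := hBe u v hadj
    have h3 : 0 ≤ y' u := le_min (hy.1 u) hB0
    have h4 : 0 ≤ y' v := le_min (hy.1 v) hB0
    rcases le_total (y u) B with hu | hu <;> rcases le_total (y v) B with hv | hv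
    · have : y' u = y u := min_eq_left hu
      have : y' v = y v := min_eq_left hv
      simp only [hy', min_eq_left hu, min_eq_left hv]
      linarith
    · have : y' v = B := min_eq_right hv
      simp only [hy', min_eq_right hv]
      have : min (y u) B ≥ 0 := h3
      linarith
    · simp only [hy', min_eq_right hu]
      linarith
    · simp only [hy', min_eq_right hu, min_eq_right hv]
      linarith
  have h5 : ∑ v, y0 v ≤ ∑ v, y' v := isMinOn_iff.mp hy0min y' hy'K
  refine h5.trans (Finset.sum_le_sum fun v _ => min_le_left _ _)

lemma exchange [Fintype V] [DecidableEq V] {G : SimpleGraph V} {M N : Finset (Sym2 V)}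
    (hM : IsMatching G M) (hN : IsMatching G N) (hcard : M.card < N.card)
    (hmin : ∀ N', IsMatching G N' → N'.card = N.card → (N \ M).card ≤ (N' \ M).card)
    {v : V} (hv : ¬ Exposed M v) : ¬ Exposed N v := by
  intro hvN
  rw [Exposed] at hv
  push_neg at hv
  obtain ⟨f, hfM, hvf⟩ := hv
  have hfs : s(v, Sym2.Mem.other hvf) = f := Sym2.other_spec hvf
  set wv := Sym2.Mem.other hvf with hwv
  have hvw : v ≠ wv := by
    intro h
    have hdiag : f.IsDiag := by
      rw [← hfs, ← h]
      exact Sym2.mk_isDiag_iff.2 rfl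
    exact G.not_isDiag_of_mem_edgeSet (hM.1 f hfM) hdiag
  have hwf : wv ∈ f := by
    rw [← hfs]; exact Sym2.mem_mk_right _ _
  have hfN : f ∉ N := fun h => hvN f h hvf
  have hNM : (N \ M).Nonempty := by
    rw [Finset.sdiff_nonempty]
    intro hsub
    exact absurd (Finset.card_le_card hsub) (not_le.2 hcard)
  obtain ⟨g, hgNM, hgw⟩ : ∃ g, g ∈ N \ M ∧ (¬ Exposed N wv → wv ∈ g) := by
    by_cases hwe : Exposed N wv
    · obtain ⟨g, hg⟩ := hNM
      exact ⟨g, hg, fun h => absurd hwe h⟩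
    · have hwe' := hwe
      rw [Exposed] at hwe'
      push_neg at hwe'
      obtain ⟨g, hgN, hwg⟩ := hwe'
      refine ⟨g, Finset.mem_sdiff.2 ⟨hgN, fun hgM => ?_⟩, fun _ => hwg⟩
      by_cases hgf : g = f
      · exact hvN g hgN (hgf ▸ hvf)
      · exact hM.2 g hgM f hfM hgf wv hwg hwf
  have hgN : g ∈ N := (Finset.mem_sdiff.1 hgNM).1
  have hgM : g ∉ M := (Finset.mem_sdiff.1 hgNM).2
  have hfN'e : f ∉ N.erase g := fun h => hfN (Finset.mem_of_mem_erase h)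
  set N' := insert f (N.erase g) with hN'
  have hNpos : 0 < N.card := Finset.card_pos.2 ⟨g, hgN⟩
  have hcard' : N'.card = N.card := by
    rw [hN', Finset.card_insert_of_notMem hfN'e, Finset.card_erase_of_mem hgN]
    omega
  have hmatch' : IsMatching G N' := by
    have key : ∀ x : V, x ∈ f → ∀ e ∈ N.erase g, x ∉ e := by
      intro x hx e he hxe
      have heN := Finset.mem_of_mem_erase he
      have heg : e ≠ g := Finset.ne_of_mem_erase he
      rw [← hfs, Sym2.mem_iff] at hx
      rcases hx with h | h
      · subst h
        exact hvN e heN hxe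
      · subst h
        by_cases hwe : Exposed N wv
        · exact hwe e heN hxe
        · exact hN.2 e heN g hgN heg wv hxe (hgw hwe)
    constructor
    · intro e he
      rcases Finset.mem_insert.1 he with rfl | he
      · exact hM.1 _ hfM
      · exact hN.1 _ (Finset.mem_of_mem_erase he)
    · intro e1 he1 e2 he2 hne x hx1 hx2
      rcases Finset.mem_insert.1 he1 with h1 | h1
      · rcases Finset.mem_insert.1 he2 with h2 | h2
        · exact hne (h1.trans h2.symm)
        · exact key x (h1 ▸ hx1) e2 h2 hx2
      · rcases Finset.mem_insert.1 he2 with h2 | h2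
        · exact key x (h2 ▸ hx2) e1 h1 hx1
        · exact hN.2 e1 (Finset.mem_of_mem_erase h1) e2 (Finset.mem_of_mem_erase h2) hne x hx1 hx2
  have hsd : N' \ M = (N \ M).erase g := by
    ext e
    simp only [hN', Finset.mem_sdiff, Finset.mem_insert, Finset.mem_erase]
    constructor
    · rintro ⟨rfl | ⟨hne, heN⟩, heM⟩
      · exact absurd hfM heM
      · exact ⟨hne, heN, heM⟩
    · rintro ⟨hne, heN, heM⟩
      exact ⟨Or.inr ⟨hne, heN⟩, heM⟩
  have hmm := hmin N' hmatch' hcard'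
  rw [hsd, Finset.card_erase_of_mem hgNM] at hmm
  have hpos : 0 < (N \ M).card := Finset.card_pos.2 ⟨g, hgNM⟩
  omega

end Stab

namespace Stab

/-- If `c` is a minimum fractional additive stabilizer of the unit-weight
graph `G`, then every matching of maximum `(1+c)`-weight has cardinality `ν(G)`. -/
theorem stmt1 {V : Type*} [Fintype V] [DecidableEq V] (G : SimpleGraph V)
    (c : Sym2 V → ℝ) (hc : IsMinStabilizer G c)
    (M : Finset (Sym2 V)) (hM : IsMaxWeightMatching G (fun e => 1 + c e) M) :
    M.card = nu G := by
  classical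
  have hbddν : BddAbove {n : ℕ | ∃ M', IsMatching G M' ∧ M'.card = n} := by
    refine ⟨Fintype.card (Sym2 V), ?_⟩
    rintro n ⟨M', _, rfl⟩
    exact Finset.card_le_univ M'
  have hMle : M.card ≤ nu G := le_csSup hbddν ⟨M, hM.1, rfl⟩
  refine le_antisymm hMle ?_
  by_contra hlt
  push_neg at hlt
  have hne : {n : ℕ | ∃ M', IsMatching G M' ∧ M'.card = n}.Nonempty :=
    ⟨0, ∅, empty_matching G, rfl⟩
  obtain ⟨Mx, hMx, hMxcard⟩ := Nat.sSup_mem hne hbddν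
  set k := M.card + 1 with hk
  have hkle : k ≤ Mx.card := by
    rw [hMxcard]
    exact hlt
  obtain ⟨N₀, hN₀sub, hN₀card⟩ := Finset.exists_subset_card_eq hkle
  have hN₀ : IsMatching G N₀ :=
    ⟨fun e he => hMx.1 e (hN₀sub he),
     fun e he f hf => hMx.2 e (hN₀sub he) f (hN₀sub hf)⟩
  -- choose N of cardinality k minimizing |N \ M|
  set S : Finset (Finset (Sym2 V)) :=
    Finset.univ.filter (fun N => IsMatching G N ∧ N.card = k) with hS
  have hSne : S.Nonempty := ⟨N₀, by simp [hS, hN₀, hN₀card]⟩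
  obtain ⟨N, hNS, hNmin⟩ := Finset.exists_min_image S (fun N => (N \ M).card) hSne
  rw [hS, Finset.mem_filter] at hNS
  obtain ⟨-, hNmatch, hNcard⟩ := hNS
  have hNMcard : M.card < N.card := by omega
  have hmin' : ∀ N', IsMatching G N' → N'.card = N.card → (N \ M).card ≤ (N' \ M).card := by
    intro N' h1 h2
    refine hNmin N' ?_
    rw [hS, Finset.mem_filter]
    exact ⟨Finset.mem_univ _, h1, by omega⟩
  have hcovN : ∀ v : V, ¬ Exposed M v → ¬ Exposed N v :=
    fun v hv => exchange hM.1 hNmatch hNMcard hmin' hv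
  -- optimal cover
  set w : Sym2 V → ℝ := fun e => 1 + c e with hw
  have hstab : nuW G w = tauW G w := hc.1.2
  have hnuW : nuW G w = weight w M := nuW_eq_weight hM
  obtain ⟨y, hycov, hysum⟩ := exists_opt_cover G w
  have hkey : weight w M = ∑ v, y v := by rw [← hnuW, hstab, ← hysum]
  -- complementary slackness
  have hc0 : ∀ e ∈ edgeFin G, 0 ≤ c e := hc.1.1
  have hedgeFin : ∀ e, e ∈ G.edgeSet → e ∈ edgeFin G := by
    intro e he
    simp only [edgeFin, Finset.mem_filter, Finset.mem_univ, true_and]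
    exact he
  have hterm : ∀ e ∈ M, 0 ≤ eSum y e - w e := by
    intro e he
    obtain ⟨u, v, hadj, rfl⟩ := edge_rep (hM.1.1 e he)
    rw [eSum_mk]
    have := hycov.2 u v hadj
    linarith
  have hcovsum : ∑ e ∈ M, eSum y e = ∑ v ∈ covFin M, y v := sum_eSum y hM.1.1 hM.1.2
  have hsplit : ∑ v ∈ Finset.univ.filter (fun v => Exposed M v), y v
      + ∑ v ∈ covFin M, y v = ∑ v, y v := by
    rw [covFin]
    exact Finset.sum_filter_add_sum_filter_not Finset.univ _ y
  have hzerosum : ∑ e ∈ M, (eSum y e - w e)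
      + ∑ v ∈ Finset.univ.filter (fun v => Exposed M v), y v = 0 := by
    have h1 : ∑ e ∈ M, (eSum y e - w e) = ∑ v ∈ covFin M, y v - weight w M := by
      rw [Finset.sum_sub_distrib, hcovsum]
      rfl
    rw [h1]
    linarith
  have hA : ∑ e ∈ M, (eSum y e - w e) = 0 := by
    have h1 : 0 ≤ ∑ e ∈ M, (eSum y e - w e) := Finset.sum_nonneg hterm
    have h2 : 0 ≤ ∑ v ∈ Finset.univ.filter (fun v => Exposed M v), y v :=
      Finset.sum_nonneg fun v _ => hycov.1 v
    linarith
  have htight : ∀ e ∈ M, eSum y e = w e := by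
    intro e he
    have := (Finset.sum_eq_zero_iff_of_nonneg hterm).1 hA e he
    linarith
  have hexp0 : ∀ v : V, Exposed M v → y v = 0 := by
    intro v hv
    have h2 : ∑ v ∈ Finset.univ.filter (fun v => Exposed M v), y v = 0 := by
      have h1 : 0 ≤ ∑ e ∈ M, (eSum y e - w e) := Finset.sum_nonneg hterm
      have h2 : 0 ≤ ∑ v ∈ Finset.univ.filter (fun v => Exposed M v), y v :=
        Finset.sum_nonneg fun v _ => hycov.1 v
      linarith
    exact (Finset.sum_eq_zero_iff_of_nonneg fun v _ => hycov.1 v).1 h2 v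
      (Finset.mem_filter.2 ⟨Finset.mem_univ v, hv⟩)
  -- the new stabilizer
  set F : Finset (Sym2 V) := N \ M with hF
  set H : Finset (Sym2 V) := M \ N with hH
  set c' : Sym2 V → ℝ := fun e => if e ∈ F then eSum y e - 1 else if e ∈ H then 0 else c e
    with hc'
  set w' : Sym2 V → ℝ := fun e => 1 + c' e with hw'
  have hFedge : ∀ e ∈ F, e ∈ G.edgeSet := fun e he => hNmatch.1 e (Finset.mem_sdiff.1 he).1
  have hHedge : ∀ e ∈ H, e ∈ G.edgeSet := fun e he => hM.1.1 e (Finset.mem_sdiff.1 he).1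
  have hF1 : ∀ e ∈ F, 1 ≤ eSum y e := by
    intro e he
    obtain ⟨u, v, hadj, rfl⟩ := edge_rep (hFedge e he)
    rw [eSum_mk]
    have h1 := hycov.2 u v hadj
    have h2 := hc0 _ (hedgeFin _ (hFedge _ he))
    simp only [hw] at h1
    linarith
  have hc'0 : ∀ e ∈ edgeFin G, 0 ≤ c' e := by
    intro e he
    simp only [hc']
    by_cases h1 : e ∈ F
    · simp only [h1, if_true]
      linarith [hF1 e h1]
    · simp only [h1, if_false]
      by_cases h2 : e ∈ H
      · simp [h2]
      · simp only [h2, if_false]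
        exact hc0 e he
  have hcover' : IsFracCover G w' y := by
    refine ⟨hycov.1, fun u v hadj => ?_⟩
    have hbase := hycov.2 u v hadj
    simp only [hw] at hbase
    simp only [hw', hc']
    by_cases h1 : s(u, v) ∈ F
    · simp only [h1, if_true]
      have := hF1 _ h1
      rw [eSum_mk] at *
      linarith
    · simp only [h1, if_false]
      by_cases h2 : s(u, v) ∈ H
      · simp only [h2, if_true]
        have := hc0 _ (hedgeFin _ (G.mem_edgeSet.2 hadj))
        linarith
      · simp only [h2, if_false]
        exact hbase
  have hexpN : ∀ v : V, Exposed N v → y v = 0 := by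
    intro v hv
    by_cases h : Exposed M v
    · exact hexp0 v h
    · exact absurd hv (hcovN v h)
  have hwN : weight w' N = ∑ v, y v := by
    have h1 : weight w' N = ∑ e ∈ N, eSum y e := by
      refine Finset.sum_congr rfl fun e he => ?_
      simp only [hw', hc']
      by_cases h1 : e ∈ F
      · simp only [h1, if_true]
        ring
      · have heM : e ∈ M := by
          by_contra heM
          exact h1 (Finset.mem_sdiff.2 ⟨he, heM⟩)
        have heH : e ∉ H := fun hh => (Finset.mem_sdiff.1 hh).2 he
        simp only [h1, if_false, heH]
        rw [htight e heM]
    rw [h1, sum_eSum y hNmatch.1 hNmatch.2]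
    have h2 : ∑ v ∈ Finset.univ.filter (fun v => Exposed N v), y v
        + ∑ v ∈ covFin N, y v = ∑ v, y v := by
      rw [covFin]
      exact Finset.sum_filter_add_sum_filter_not Finset.univ _ y
    have h3 : ∑ v ∈ Finset.univ.filter (fun v => Exposed N v), y v = 0 :=
      Finset.sum_eq_zero fun v hv => hexpN v (Finset.mem_filter.1 hv).2
    linarith
  -- stability of c'
  have hub : ∀ N₁, IsMatching G N₁ → weight w' N₁ ≤ ∑ v, y v :=
    fun N₁ h => weight_le_sum hcover' h
  have hnuW' : nuW G w' = ∑ v, y v := by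
    refine le_antisymm (csSup_le ⟨weight w' N, N, hNmatch, rfl⟩ ?_)
      (le_csSup ⟨∑ v, y v, ?_⟩ ⟨N, hNmatch, hwN.symm⟩)
    · rintro x ⟨N₁, h₁, rfl⟩
      exact hub N₁ h₁
    · rintro x ⟨N₁, h₁, rfl⟩
      exact hub N₁ h₁
  have htauW' : tauW G w' = ∑ v, y v := by
    refine le_antisymm (csInf_le (tau_bddBelow G w') ⟨y, hcover', rfl⟩)
      (le_csInf ⟨∑ v, y v, y, hcover', rfl⟩ ?_)
    rintro x ⟨y₁, h₁, rfl⟩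
    calc ∑ v, y v = weight w' N := hwN.symm
      _ ≤ ∑ v, y₁ v := weight_le_sum h₁ hNmatch
  have hstab' : IsStabilizer G c' := by
    refine ⟨hc'0, ?_⟩
    show nuW G w' = tauW G w'
    rw [hnuW', htauW']
  -- cost comparison
  have hFsub : F ⊆ edgeFin G := fun e he => hedgeFin e (hFedge e he)
  have hHsub : H ⊆ edgeFin G := fun e he => hedgeFin e (hHedge e he)
  have hdisjFH : Disjoint F H := by
    rw [Finset.disjoint_left]
    intro e he1 he2
    exact (Finset.mem_sdiff.1 he1).2 (Finset.mem_sdiff.1 he2).1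
  have hFH : F ∪ H ⊆ edgeFin G := Finset.union_subset hFsub hHsub
  have hdiff : cost G c' - cost G c = ∑ e ∈ F, (eSum y e - 1 - c e) + ∑ e ∈ H, (0 - c e) := by
    have h1 : cost G c' - cost G c = ∑ e ∈ edgeFin G, (c' e - c e) := by
      rw [Finset.sum_sub_distrib]
      rfl
    have h2 : ∑ e ∈ edgeFin G, (c' e - c e) = ∑ e ∈ F ∪ H, (c' e - c e) := by
      refine (Finset.sum_subset hFH ?_).symm
      intro e he1 he2
      simp only [Finset.mem_union, not_or] at he2
      simp only [hc', he2.1, if_false, he2.2, sub_self]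
    have h3 : ∑ e ∈ F ∪ H, (c' e - c e) = ∑ e ∈ F, (c' e - c e) + ∑ e ∈ H, (c' e - c e) :=
      Finset.sum_union hdisjFH
    have h4 : ∑ e ∈ F, (c' e - c e) = ∑ e ∈ F, (eSum y e - 1 - c e) := by
      refine Finset.sum_congr rfl fun e he => ?_
      simp only [hc', he, if_true]
    have h5 : ∑ e ∈ H, (c' e - c e) = ∑ e ∈ H, (0 - c e) := by
      refine Finset.sum_congr rfl fun e he => ?_
      have heF : e ∉ F := Finset.disjoint_right.1 hdisjFH he
      simp only [hc', heF, if_false, he, if_true]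
    rw [h1, h2, h3, h4, h5]
  have hFsum : ∑ e ∈ F, eSum y e = ∑ v ∈ covFin F, y v :=
    sum_eSum y hFedge (fun e he f hf => hNmatch.2 e (Finset.mem_sdiff.1 he).1
      f (Finset.mem_sdiff.1 hf).1)
  have hHsum : ∑ e ∈ H, eSum y e = ∑ v ∈ covFin H, y v :=
    sum_eSum y hHedge (fun e he f hf => hM.1.2 e (Finset.mem_sdiff.1 he).1
      f (Finset.mem_sdiff.1 hf).1)
  have hFHcov : ∑ v ∈ covFin F, y v ≤ ∑ v ∈ covFin H, y v := by
    have hzero : ∀ v ∈ covFin F \ covFin H, y v = 0 := by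
      intro v hv
      obtain ⟨hvF, hvH⟩ := Finset.mem_sdiff.1 hv
      obtain ⟨e, heF, hve⟩ := mem_covFin.1 hvF
      refine hexp0 v ?_
      intro f hfM hvf
      by_cases hfN : f ∈ N
      · by_cases hef : e = f
        · exact (Finset.mem_sdiff.1 heF).2 (hef ▸ hfM)
        · exact hNmatch.2 e (Finset.mem_sdiff.1 heF).1 f hfN hef v hve hvf
      · exact hvH (mem_covFin.2 ⟨f, Finset.mem_sdiff.2 ⟨hfM, hfN⟩, hvf⟩)
    have h1 : ∑ v ∈ covFin F, y v
        = ∑ v ∈ covFin F ∩ covFin H, y v + ∑ v ∈ covFin F \ covFin H, y v :=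
      (Finset.sum_inter_add_sum_sdiff _ _ _).symm
    have h2 : ∑ v ∈ covFin F \ covFin H, y v = 0 := Finset.sum_eq_zero hzero
    have h3 : ∑ v ∈ covFin F ∩ covFin H, y v ≤ ∑ v ∈ covFin H, y v :=
      Finset.sum_le_sum_of_subset_of_nonneg (Finset.inter_subset_right)
        (fun v _ _ => hycov.1 v)
    linarith
  have hHtight : ∑ e ∈ H, eSum y e = H.card + ∑ e ∈ H, c e := by
    rw [Finset.sum_congr rfl (fun e he => htight e (Finset.mem_sdiff.1 he).1)]
    simp only [hw]
    rw [Finset.sum_add_distrib]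
    simp
    rfl
  have hcardFH : (F.card : ℝ) = H.card + 1 := by
    have h1 := Finset.card_sdiff_add_card_inter N M
    have h2 := Finset.card_sdiff_add_card_inter M N
    rw [Finset.inter_comm] at h2
    have : F.card = H.card + 1 := by
      simp only [hF, hH]
      omega
    exact_mod_cast congrArg (Nat.cast : ℕ → ℝ) this
  have hFc : 0 ≤ ∑ e ∈ F, c e := Finset.sum_nonneg fun e he => hc0 e (hFsub he)
  have hcost : cost G c' ≤ cost G c - 1 := by
    have h1 : ∑ e ∈ F, (eSum y e - 1 - c e) = ∑ e ∈ F, eSum y e - F.card - ∑ e ∈ F, c e := by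
      rw [Finset.sum_sub_distrib, Finset.sum_sub_distrib]
      simp
    have h2 : ∑ e ∈ H, (0 - c e) = - ∑ e ∈ H, c e := by
      rw [Finset.sum_sub_distrib]
      simp
    have h3 : ∑ e ∈ F, eSum y e ≤ (H.card : ℝ) + ∑ e ∈ H, c e := by
      rw [hFsum, ← hHtight, hHsum]
      exact hFHcov
    have h4 : cost G c' - cost G c ≤ -1 := by
      rw [hdiff, h1, h2]
      linarith [hcardFH, hFc, h3]
    linarith
  have := hc.2 c' hstab'
  linarith

end Stab
end
end

section
/- Let G=(V,E) be a finite simple graph with Gallai–Edmonds decomposition V = X ∪ Y ∪ Z, and write G−Z for the induced subgraph G[X ∪ Y]. The induced subgraph G[Z] has a perfect matching, and there are no edges of G between X and Z. Moreover, if (M₀, y₀, c₀) is a feasible MFASP solution of G−Z with y₀(v) ≥ 1/2 for every v ∈ Y, then setting M := M₀ ∪ P for any perfect matching P of G[Z], c_e := c₀(e) for edges e of G−Z and c_e := 0 for all other edges of G, and y_v := y₀(v) for v ∈ X ∪ Y and y_v := 1/2 for v ∈ Z, yields a feasible MFASP solution (M,y,c) of G with ∑_{e∈E} c_e = ∑_e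 c₀(e). -/
open Finset
open scoped Classical

noncomputable section

namespace Stab

/-- a feasible MFASP solution of the induced subgraph `G[S]` (vertex cover values and
matching restricted to `S`) -/
def FeasSolOn {V : Type*} [Fintype V] [DecidableEq V] (G : SimpleGraph V) (S : Set V)
    (M : Finset (Sym2 V)) (y : V → ℝ) (c : Sym2 V → ℝ) : Prop :=
  (∀ e ∈ M, e ∈ edgesIn G S) ∧
  (∀ e ∈ M, ∀ f ∈ M, e ≠ f → ∀ v : V, v ∈ e → v ∉ f) ∧
  (∀ e ∈ edgesIn G S, 0 ≤ c e) ∧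
  (∀ v ∈ S, 0 ≤ y v) ∧
  (∀ u v : V, G.Adj u v → u ∈ S → v ∈ S → 1 + c s(u, v) ≤ y u + y v) ∧
  (∑ e ∈ M, (1 + c e)) = ∑ v ∈ Finset.univ.filter (· ∈ S), y v

section Aux

variable {V : Type*} [Fintype V] [DecidableEq V] {G : SimpleGraph V}

lemma mem_edgesIn {S : Set V} {e : Sym2 V} :
    e ∈ edgesIn G S ↔ e ∈ G.edgeSet ∧ ∀ v ∈ e, v ∈ S := by
  simp [edgesIn]

lemma mem_edgeFin {e : Sym2 V} : e ∈ edgeFin G ↔ e ∈ G.edgeSet := by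
  simp [edgeFin]

lemma matching_unique {M : Finset (Sym2 V)} (hM : IsMatching G M) {e f : Sym2 V} {v : V}
    (he : e ∈ M) (hf : f ∈ M) (hv : v ∈ e) (hv' : v ∈ f) : e = f := by
  by_contra h
  exact hM.2 e he f hf h v hv hv'

lemma exists_max_matching (G : SimpleGraph V) : ∃ M, IsMaxMatching G M := by
  obtain ⟨M, hM, hmax⟩ := Finset.exists_max_image
    (Finset.univ.filter fun M : Finset (Sym2 V) => IsMatching G M) Finset.card
    ⟨∅, Finset.mem_filter.2 ⟨Finset.mem_univ _, by simp [IsMatching]⟩⟩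
  exact ⟨M, (Finset.mem_filter.1 hM).2, fun M' hM' => hmax M' (by simp [hM'])⟩

lemma swap_matching {C : Finset (Sym2 V)} (hC : IsMatching G C) {e : Sym2 V} (heC : e ∈ C)
    {a u : V} (hu : u ∈ e) (ha : Exposed C a) (hadj : G.Adj a u) :
    IsMatching G (insert s(a, u) (C.erase e)) ∧
      (insert s(a, u) (C.erase e)).card = C.card := by
  have hnotmem : s(a, u) ∉ C.erase e := fun h => ha _ (Finset.mem_of_mem_erase h) (by simp)
  constructor
  · constructor
    · intro g hg
      rcases Finset.mem_insert.1 hg with rfl | hg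
      · exact hadj
      · exact hC.1 g (Finset.mem_of_mem_erase hg)
    · intro g hg f hf hne v hvg hvf
      rcases Finset.mem_insert.1 hg with rfl | hg' <;> rcases Finset.mem_insert.1 hf with rfl | hf'
      · exact hne rfl
      · rcases Sym2.mem_iff.1 hvg with rfl | rfl
        · exact ha _ (Finset.mem_of_mem_erase hf') hvf
        · exact hC.2 e heC f (Finset.mem_of_mem_erase hf')
            (Ne.symm (Finset.ne_of_mem_erase hf')) v hu hvf
      · rcases Sym2.mem_iff.1 hvf with rfl | rfl
        · exact ha g (Finset.mem_of_mem_erase hg') hvg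
        · exact hC.2 e heC g (Finset.mem_of_mem_erase hg')
            (Ne.symm (Finset.ne_of_mem_erase hg')) v hu hvg
      · exact hC.2 g (Finset.mem_of_mem_erase hg') f (Finset.mem_of_mem_erase hf') hne v hvg hvf
  · rw [Finset.card_insert_of_notMem hnotmem, Finset.card_erase_of_mem heC]
    exact Nat.succ_pred_eq_of_pos (Finset.card_pos.2 ⟨e, heC⟩)

lemma max_of_card_eq {M N : Finset (Sym2 V)} (hM : IsMaxMatching G M) (hN : IsMatching G N)
    (h : N.card = M.card) : IsMaxMatching G N :=
  ⟨hN, fun M' hM' => h ▸ hM.2 M' hM'⟩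

lemma exposed_swap {C : Finset (Sym2 V)} (hC : IsMatching G C) {e g : Sym2 V} (heC : e ∈ C)
    {w : V} (hw : w ∈ e) (hwg : w ∉ g) : Exposed (insert g (C.erase e)) w := by
  intro f hf hwf
  rcases Finset.mem_insert.1 hf with rfl | hf
  · exact hwg hwf
  · exact Finset.ne_of_mem_erase hf
      (matching_unique hC (Finset.mem_of_mem_erase hf) heC hwf hw)

lemma lemW (G : SimpleGraph V) {B : Finset (Sym2 V)} (hB : IsMaxMatching G B) {y z : V}
    (hyz : s(y, z) ∈ B) (hy : y ∉ geX G) (hz : z ∉ geX G) :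
    ∀ n (A : Finset (Sym2 V)) (x : V), (B \ A).card = n → IsMaxMatching G A → Exposed A x →
      ∃ C, IsMaxMatching G C ∧ s(y, z) ∈ C ∧ Exposed C x ∧ ∀ e ∈ A, e ∈ B → e ∈ C := by
  intro n
  induction n using Nat.strong_induction_on with
  | _ n IH =>
  intro A x hcard hA hx
  have hxy : x ≠ y := fun h => hy ⟨A, hA, h ▸ hx⟩
  have hxz : x ≠ z := fun h => hz ⟨A, hA, h ▸ hx⟩
  by_cases h1 : s(y, z) ∈ A
  · exact ⟨A, hA, h1, hx, fun e he _ => he⟩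
  by_cases h2 : Exposed B x
  · exact ⟨B, hB, hyz, h2, fun e _ he => he⟩
  have h2' : ∃ e ∈ B, x ∈ e := by
    by_contra hco; exact h2 fun e he hxe => hco ⟨e, he, hxe⟩
  obtain ⟨e, heB, hxe⟩ := h2'
  obtain ⟨x1, rfl⟩ := Sym2.mem_iff_exists.1 hxe
  have hadj1 : G.Adj x x1 := G.mem_edgeSet.1 (hB.1.1 _ heB)
  have hxx1 : x ≠ x1 := hadj1.ne
  have hx1y : x1 ≠ y := by
    rintro rfl
    rcases Sym2.eq_iff.1
        (matching_unique hB.1 heB hyz (Sym2.mem_mk_right x x1) (Sym2.mem_mk_left x1 z)) with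
      ⟨ha', hb'⟩ | ⟨ha', hb'⟩
    · exact hxx1 ha'
    · exact hxz ha'
  have hx1z : x1 ≠ z := by
    rintro rfl
    rcases Sym2.eq_iff.1
        (matching_unique hB.1 heB hyz (Sym2.mem_mk_right x x1) (Sym2.mem_mk_right y x1)) with
      ⟨ha', hb'⟩ | ⟨ha', hb'⟩
    · exact hxy ha'
    · exact hxx1 ha'
  by_cases h3 : Exposed A x1
  · exfalso
    have hnot : s(x, x1) ∉ A := fun h => hx _ h (by simp)
    have hmatch : IsMatching G (insert s(x, x1) A) := by
      constructor
      · intro g hg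
        rcases Finset.mem_insert.1 hg with rfl | hg
        · exact hadj1
        · exact hA.1.1 g hg
      · intro g hg f hf hne v hvg hvf
        rcases Finset.mem_insert.1 hg with rfl | hg' <;>
          rcases Finset.mem_insert.1 hf with rfl | hf'
        · exact hne rfl
        · rcases Sym2.mem_iff.1 hvg with rfl | rfl
          · exact hx f hf' hvf
          · exact h3 f hf' hvf
        · rcases Sym2.mem_iff.1 hvf with rfl | rfl
          · exact hx g hg' hvg
          · exact h3 g hg' hvg
        · exact hA.1.2 g hg' f hf' hne v hvg hvf
    have := hA.2 _ hmatch
    rw [Finset.card_insert_of_notMem hnot] at this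
    omega
  have h3' : ∃ f ∈ A, x1 ∈ f := by
    by_contra hco; exact h3 fun f hf h => hco ⟨f, hf, h⟩
  obtain ⟨f, hfA, hx1f⟩ := h3'
  obtain ⟨x2, rfl⟩ := Sym2.mem_iff_exists.1 hx1f
  have hadj2 : G.Adj x1 x2 := G.mem_edgeSet.1 (hA.1.1 _ hfA)
  have hx2x : x2 ≠ x := by rintro rfl; exact hx _ hfA (by simp)
  have hfB : s(x1, x2) ∉ B := by
    intro h
    rcases Sym2.eq_iff.1
        (matching_unique hB.1 h heB (Sym2.mem_mk_left x1 x2) (Sym2.mem_mk_right x x1)) with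
      ⟨ha', hb'⟩ | ⟨ha', hb'⟩
    · exact hxx1 ha'.symm
    · exact hx2x hb'
  have hswapA := swap_matching hA.1 hfA (by simp : x1 ∈ s(x1, x2)) hx hadj1
  set A' := insert s(x, x1) (A.erase s(x1, x2)) with hA'def
  have hA'max : IsMaxMatching G A' := max_of_card_eq hA hswapA.1 hswapA.2
  have hxA'2 : Exposed A' x2 := by
    intro g hg hx2g
    rcases Finset.mem_insert.1 hg with rfl | hg
    · rcases Sym2.mem_iff.1 hx2g with h | h
      · exact hx2x h
      · exact hadj2.ne h.symm
    · exact Finset.ne_of_mem_erase hg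
        (matching_unique hA.1 (Finset.mem_of_mem_erase hg) hfA hx2g (by simp))
  have hsub : B \ A' ⊆ (B \ A).erase s(x, x1) := by
    intro g hg
    rw [Finset.mem_sdiff] at hg
    obtain ⟨hgB, hgA'⟩ := hg
    rw [Finset.mem_erase, Finset.mem_sdiff]
    have hne : g ≠ s(x, x1) := fun h => hgA' (h ▸ Finset.mem_insert_self _ _)
    refine ⟨hne, hgB, fun hgA => hgA' ?_⟩
    exact Finset.mem_insert_of_mem (Finset.mem_erase.2 ⟨fun h => hfB (h ▸ hgB), hgA⟩)
  have hmemdiff : s(x, x1) ∈ B \ A := Finset.mem_sdiff.2 ⟨heB, fun h => hx _ h (by simp)⟩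
  have hlt : (B \ A').card < n := by
    calc (B \ A').card ≤ ((B \ A).erase s(x, x1)).card := Finset.card_le_card hsub
    _ < (B \ A).card := Finset.card_erase_lt_of_mem hmemdiff
    _ = n := hcard
  obtain ⟨C, hCmax, hCyz, hCx2, hCsub⟩ := IH _ hlt A' x2 rfl hA'max hxA'2
  have hxx1C : s(x, x1) ∈ C := hCsub _ (Finset.mem_insert_self _ _) heB
  have hswapC := swap_matching hCmax.1 hxx1C (by simp : x1 ∈ s(x, x1)) hCx2 hadj2.symm
  refine ⟨insert s(x2, x1) (C.erase s(x, x1)),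
    max_of_card_eq hCmax hswapC.1 hswapC.2, ?_, ?_, ?_⟩
  · refine Finset.mem_insert_of_mem (Finset.mem_erase.2 ⟨?_, hCyz⟩)
    intro h
    rcases Sym2.eq_iff.1 h with ⟨h1', h2'⟩ | ⟨h1', h2'⟩
    · exact hxy h1'.symm
    · exact hx1y h1'.symm
  · refine exposed_swap hCmax.1 hxx1C (by simp) ?_
    intro h
    rcases Sym2.mem_iff.1 h with h | h
    · exact hx2x h.symm
    · exact hxx1 h
  · intro g hgA hgB
    have hgf : g ≠ s(x1, x2) := fun h => hfB (h ▸ hgB)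
    have hgxx1 : g ≠ s(x, x1) := fun h => hx g hgA (by rw [h]; simp)
    have hgA' : g ∈ A' := Finset.mem_insert_of_mem (Finset.mem_erase.2 ⟨hgf, hgA⟩)
    exact Finset.mem_insert_of_mem (Finset.mem_erase.2 ⟨hgxx1, hCsub g hgA' hgB⟩)

lemma geZ_pm (G : SimpleGraph V) : ∃ P : Finset (Sym2 V), IsMatching G P ∧
    (∀ e ∈ P, ∀ v ∈ e, v ∈ geZ G) ∧ ∀ v ∈ geZ G, ¬ Exposed P v := by
  obtain ⟨M, hM⟩ := exists_max_matching G
  refine ⟨M.filter fun e => ∀ v ∈ e, v ∈ geZ G, ⟨?_, ?_⟩, ?_, ?_⟩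
  · exact fun e he => hM.1.1 e (Finset.mem_filter.1 he).1
  · exact fun e he f hf => hM.1.2 e (Finset.mem_filter.1 he).1 f (Finset.mem_filter.1 hf).1
  · exact fun e he => (Finset.mem_filter.1 he).2
  · intro z hzZ hexp
    have hz : z ∉ geX G := hzZ.1
    have hcov : ∃ e ∈ M, z ∈ e := by
      by_contra hco
      exact hz ⟨M, hM, fun e he h => hco ⟨e, he, h⟩⟩
    obtain ⟨e, heM, hze⟩ := hcov
    obtain ⟨t, rfl⟩ := Sym2.mem_iff_exists.1 hze
    have hadj : G.Adj z t := G.mem_edgeSet.1 (hM.1.1 _ heM)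
    have htZ : t ∈ geZ G := by
      constructor
      · intro htX
        exact hzZ.2 ⟨hzZ.1, t, htX, hadj.symm⟩
      · intro htY
        obtain ⟨htX, x, hxX, hxt⟩ := htY
        have hxz : x ≠ z := fun h => hz (h ▸ hxX)
        obtain ⟨A, hAmax, hAx⟩ := hxX
        have htzM : s(t, z) ∈ M := by rw [Sym2.eq_swap]; exact heM
        obtain ⟨C, hCmax, hCtz, hCx, -⟩ :=
          lemW G hM htzM htX hz ((M \ A).card) A x rfl hAmax hAx
        have hswap := swap_matching hCmax.1 hCtz (by simp : t ∈ s(t, z)) hCx hxt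
        refine hz ⟨_, max_of_card_eq hCmax hswap.1 hswap.2, ?_⟩
        refine exposed_swap hCmax.1 hCtz (by simp) ?_
        intro h
        rcases Sym2.mem_iff.1 h with h | h
        · exact hxz h.symm
        · exact hadj.ne h
    refine hexp _ (Finset.mem_filter.2 ⟨heM, fun v hv => ?_⟩) hze
    rcases Sym2.mem_iff.1 hv with rfl | rfl
    · exact hzZ
    · exact htZ

end Aux

/-- for the Gallai–Edmonds decomposition `V = X ∪ Y ∪ Z`, the graph `G[Z]`
has a perfect matching and there are no `X–Z` edges; moreover any feasible MFASP solution
of `G − Z = G[X ∪ Y]` with `y ≥ 1/2` on `Y` extends, using any perfect matching of `G[Z]`,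
zero stabilizer values outside `G − Z` and cover value `1/2` on `Z`, to a feasible MFASP
solution of `G` of the same cost. -/
theorem stmt5 {V : Type*} [Fintype V] [DecidableEq V] (G : SimpleGraph V) :
    (∃ P : Finset (Sym2 V), IsMatching G P ∧ (∀ e ∈ P, ∀ v ∈ e, v ∈ geZ G) ∧
      ∀ v ∈ geZ G, ¬ Exposed P v) ∧
    (∀ u ∈ geX G, ∀ v ∈ geZ G, ¬ G.Adj u v) ∧
    (∀ (M₀ : Finset (Sym2 V)) (y₀ : V → ℝ) (c₀ : Sym2 V → ℝ),
      FeasSolOn G (geX G ∪ geY G) M₀ y₀ c₀ →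
      (∀ v ∈ geY G, 1 / 2 ≤ y₀ v) →
      ∀ P : Finset (Sym2 V), IsMatching G P → (∀ e ∈ P, ∀ v ∈ e, v ∈ geZ G) →
        (∀ v ∈ geZ G, ¬ Exposed P v) →
        FeasSol G (M₀ ∪ P)
          (fun v => if v ∈ geZ G then 1 / 2 else y₀ v)
          (fun e => if e ∈ edgesIn G (geX G ∪ geY G) then c₀ e else 0) ∧
        cost G (fun e => if e ∈ edgesIn G (geX G ∪ geY G) then c₀ e else 0)
          = ∑ e ∈ edgesIn G (geX G ∪ geY G), c₀ e) := by
  have hSZ : ∀ v : V, v ∈ geZ G ↔ v ∉ (geX G ∪ geY G) := by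
    intro v
    constructor
    · rintro ⟨h1, h2⟩ (h | h)
      exacts [h1 h, h2 h]
    · intro h
      exact ⟨fun h' => h (Or.inl h'), fun h' => h (Or.inr h')⟩
  have hdisjSZ : ∀ {v : V}, v ∈ geX G ∪ geY G → v ∈ geZ G → False :=
    fun h h' => (hSZ _).1 h' h
  refine ⟨geZ_pm G, ?_, ?_⟩
  · intro u hu v hv hadj
    exact hv.2 ⟨hv.1, u, hu, hadj⟩
  intro M₀ y₀ c₀ hF hY P hPmat hPZ hPcov
  obtain ⟨hM₀in, hM₀dis, hc₀, hy₀, hcover, hsum₀⟩ := hF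
  have hM₀S : ∀ e ∈ M₀, ∀ v ∈ e, v ∈ geX G ∪ geY G :=
    fun e he => (mem_edgesIn.1 (hM₀in e he)).2
  have hM₀E : ∀ e ∈ M₀, e ∈ G.edgeSet :=
    fun e he => (mem_edgesIn.1 (hM₀in e he)).1
  have hPnotin : ∀ e ∈ P, e ∉ edgesIn G (geX G ∪ geY G) := fun e he h =>
    hdisjSZ ((mem_edgesIn.1 h).2 _ (Sym2.out_fst_mem e))
      (hPZ _ he _ (Sym2.out_fst_mem e))
  have hdisjMP : Disjoint M₀ P := by
    rw [Finset.disjoint_left]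
    intro e heM heP
    exact hdisjSZ (hM₀S _ heM _ (Sym2.out_fst_mem e)) (hPZ _ heP _ (Sym2.out_fst_mem e))
  have hmatch : IsMatching G (M₀ ∪ P) := by
    constructor
    · intro e he
      rcases Finset.mem_union.1 he with h | h
      · exact hM₀E e h
      · exact hPmat.1 e h
    · intro e he f hf hne v hv hvf
      rcases Finset.mem_union.1 he with h | h <;> rcases Finset.mem_union.1 hf with h' | h'
      · exact hM₀dis e h f h' hne v hv hvf
      · exact hdisjSZ (hM₀S e h v hv) (hPZ f h' v hvf)
      · exact hdisjSZ (hM₀S f h' v hvf) (hPZ e h v hv)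
      · exact hPmat.2 e h f h' hne v hv hvf
  have hZcard : (Finset.univ.filter (· ∈ geZ G)).card = 2 * P.card := by
    have hbi : Finset.univ.filter (· ∈ geZ G)
        = P.biUnion fun e => Finset.univ.filter (· ∈ e) := by
      ext v
      simp only [Finset.mem_biUnion, Finset.mem_filter, Finset.mem_univ, true_and]
      constructor
      · intro hv
        by_contra hco
        exact hPcov v hv fun e he hve => hco ⟨e, he, hve⟩
      · rintro ⟨e, he, hve⟩
        exact hPZ e he v hve
    rw [hbi, Finset.card_biUnion]
    · have h2 : ∀ e ∈ P, (Finset.univ.filter (· ∈ e)).card = 2 := by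
        intro e he
        obtain ⟨b, hb⟩ := Sym2.mem_iff_exists.1 (Sym2.out_fst_mem e)
        set a := e.out.1 with hadef
        have hab : a ≠ b := by
          have : G.Adj a b := G.mem_edgeSet.1 (hb ▸ hPmat.1 e he)
          exact this.ne
        have : Finset.univ.filter (· ∈ e) = {a, b} := by
          ext w
          simp [hb, Sym2.mem_iff, Finset.mem_insert]
        rw [this, Finset.card_insert_of_notMem (by simp [hab]), Finset.card_singleton]
      rw [Finset.sum_congr rfl h2, Finset.sum_const, smul_eq_mul, mul_comm]
    · intro e he f hf hne
      rw [Function.onFun, Finset.disjoint_left]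
      intro v hv hv'
      exact hPmat.2 e he f hf hne v (Finset.mem_filter.1 hv).2 (Finset.mem_filter.1 hv').2
  have hcostEq : cost G (fun e => if e ∈ edgesIn G (geX G ∪ geY G) then c₀ e else 0)
      = ∑ e ∈ edgesIn G (geX G ∪ geY G), c₀ e := by
    have hsub : edgesIn G (geX G ∪ geY G) ⊆ edgeFin G := fun e he =>
      mem_edgeFin.2 (mem_edgesIn.1 he).1
    rw [cost, Finset.sum_ite_mem, Finset.inter_eq_right.2 hsub]
  refine ⟨⟨hmatch, ?_, ⟨?_, ?_⟩, ?_⟩, hcostEq⟩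
  · intro e _
    dsimp only
    split
    · exact hc₀ e ‹_›
    · exact le_refl 0
  · intro v
    dsimp only
    split
    · norm_num
    · rename_i hvz
      refine hy₀ v ?_
      by_contra h'
      exact hvz ((hSZ v).2 h')
  · intro u v hadj
    dsimp only
    by_cases hu : u ∈ geZ G <;> by_cases hv : v ∈ geZ G
    · have h1 : s(u, v) ∉ edgesIn G (geX G ∪ geY G) := fun h =>
        hdisjSZ ((mem_edgesIn.1 h).2 u (Sym2.mem_mk_left u v)) hu
      rw [if_neg h1, if_pos hu, if_pos hv]
      norm_num
    · have h1 : s(u, v) ∉ edgesIn G (geX G ∪ geY G) := fun h =>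
        hdisjSZ ((mem_edgesIn.1 h).2 u (Sym2.mem_mk_left u v)) hu
      have hvY : v ∈ geY G := by
        have hvS : v ∈ geX G ∪ geY G := by
          by_contra h'
          exact hv ((hSZ v).2 h')
        rcases hvS with h' | h'
        · exact absurd (hu.2 ⟨hu.1, v, h', hadj.symm⟩) not_false
        · exact h'
      rw [if_neg h1, if_pos hu, if_neg hv]
      have := hY v hvY
      linarith
    · have h1 : s(u, v) ∉ edgesIn G (geX G ∪ geY G) := fun h =>
        hdisjSZ ((mem_edgesIn.1 h).2 v (Sym2.mem_mk_right u v)) hv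
      have huY : u ∈ geY G := by
        have huS : u ∈ geX G ∪ geY G := by
          by_contra h'
          exact hu ((hSZ u).2 h')
        rcases huS with h' | h'
        · exact absurd (hv.2 ⟨hv.1, u, h', hadj⟩) not_false
        · exact h'
      rw [if_neg h1, if_neg hu, if_pos hv]
      have := hY u huY
      linarith
    · have huS : u ∈ geX G ∪ geY G := by
        by_contra h'; exact hu ((hSZ u).2 h')
      have hvS : v ∈ geX G ∪ geY G := by
        by_contra h'; exact hv ((hSZ v).2 h')
      have h1 : s(u, v) ∈ edgesIn G (geX G ∪ geY G) := by
        refine mem_edgesIn.2 ⟨hadj, fun w hw => ?_⟩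
        rcases Sym2.mem_iff.1 hw with rfl | rfl
        · exact huS
        · exact hvS
      rw [if_pos h1, if_neg hu, if_neg hv]
      exact hcover u v hadj huS hvS
  · rw [Finset.sum_union hdisjMP]
    have hM0 : (∑ e ∈ M₀, (1 + if e ∈ edgesIn G (geX G ∪ geY G) then c₀ e else 0))
        = ∑ e ∈ M₀, (1 + c₀ e) :=
      Finset.sum_congr rfl fun e he => by rw [if_pos (hM₀in e he)]
    have hP : (∑ e ∈ P, (1 + if e ∈ edgesIn G (geX G ∪ geY G) then c₀ e else 0))
        = (P.card : ℝ) := by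
      rw [Finset.sum_congr rfl fun e he => by rw [if_neg (hPnotin e he)]]
      simp
    have hR : (∑ v : V, if v ∈ geZ G then (1 : ℝ) / 2 else y₀ v)
        = (∑ v ∈ Finset.univ.filter (· ∈ geX G ∪ geY G), y₀ v) + (P.card : ℝ) := by
      rw [← Finset.sum_filter_add_sum_filter_not Finset.univ (· ∈ geX G ∪ geY G)]
      have e1 : (∑ v ∈ Finset.univ.filter (· ∈ geX G ∪ geY G),
          if v ∈ geZ G then (1 : ℝ) / 2 else y₀ v)
          = ∑ v ∈ Finset.univ.filter (· ∈ geX G ∪ geY G), y₀ v :=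
        Finset.sum_congr rfl fun v hv =>
          if_neg fun h => hdisjSZ (Finset.mem_filter.1 hv).2 h
      have e2 : Finset.univ.filter (fun v => ¬ v ∈ (geX G ∪ geY G))
          = Finset.univ.filter (· ∈ geZ G) := by
        ext v
        simp only [Finset.mem_filter, Finset.mem_univ, true_and]
        exact ⟨fun h => (hSZ v).2 h, fun h => (hSZ v).1 h⟩
      have e3 : (∑ v ∈ Finset.univ.filter (fun v => ¬ v ∈ (geX G ∪ geY G)),
          if v ∈ geZ G then (1 : ℝ) / 2 else y₀ v) = (P.card : ℝ) := by
        rw [e2, Finset.sum_congr rfl fun v hv => if_pos (Finset.mem_filter.1 hv).2,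
          Finset.sum_const, hZcard]
        push_cast
        ring
      rw [e1, e3]
    rw [hM0, hP, hR, hsum₀]
    congr 1
    congr 1
    apply Finset.filter_congr_decidable

end Stab
end
end
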